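/- In A_n(X) with n ≥ 2, for all a,b ∈ X and all 1 ≤ j ≤ n−1, one has V(a,b)·e_j = e_{j−1} e_{j−2} ⋯ e_1 · W(a,b) · e_{n−1} e_{n−2} ⋯ e_j (with the convention that the left product e_{j−1}⋯e_1 is empty when j = 1). -/
import Mathlib


/-- The ascending product `e j * e (j+1) * ⋯ * e k` (empty if `k + 1 ≤ j`). -/
def ascProd {A : Type*} [Ring A] (e : ℕ → A) (j k : ℕ) : A :=
  ((List.range (k + 1 - j)).map (fun i => e (j + i))).prod

/-- The descending product `e k * e (k-1) * ⋯ * e j` (empty if `k + 1 ≤ j`). -/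
def descProd {A : Type*} [Ring A] (e : ℕ → A) (j k : ℕ) : A :=
  ((List.range (k + 1 - j)).map (fun i => e (k - i))).prod

/-- For `n` odd, `O = e 1 * e 3 * ⋯ * e (n-2)` (equal to `1` when `n = 1`). -/
def Oprod {A : Type*} [Ring A] (e : ℕ → A) (n : ℕ) : A :=
  ((List.range ((n - 1) / 2)).map (fun i => e (2 * i + 1))).prod

/-- For `n` odd, `E = e 2 * e 4 * ⋯ * e (n-1)` (equal to `1` when `n = 1`). -/
def Eprod {A : Type*} [Ring A] (e : ℕ → A) (n : ℕ) : A :=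
  ((List.range ((n - 1) / 2)).map (fun i => e (2 * i + 2))).prod

/-- For `n` even, `Θ = e 1 * e 3 * ⋯ * e (n-1)`. -/
def ThetaProd {A : Type*} [Ring A] (e : ℕ → A) (n : ℕ) : A :=
  ((List.range (n / 2)).map (fun i => e (2 * i + 1))).prod

/-- For `n` even, `Ω = e 2 * e 4 * ⋯ * e (n-2)` (equal to `1` when `n = 2`). -/
def OmegaProd {A : Type*} [Ring A] (e : ℕ → A) (n : ℕ) : A :=
  ((List.range (n / 2 - 1)).map (fun i => e (2 * i + 2))).prod

/-- The defining relations (L1)–(L38) of the algebraic label algebra `A_n(X)`,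
with TL generators `e i` (`1 ≤ i ≤ n - 1`), label generators `F a b`, `G a b`
(even) and `W a b`, `V a b` (odd), and parameters `β`, `α a b`, `δ a b`, `γ a b`
in a commutative base ring `R`. -/
structure LabelAlgebraRel (R : Type*) [CommRing R] (A : Type*) [Ring A] [Algebra R A]
    (X : Type*) (n : ℕ) (e : ℕ → A) (F G W V : X → X → A)
    (β : R) (α δ γ : X → X → R) : Prop where
  L1 : ∀ i j, 1 ≤ i → i ≤ n - 1 → 1 ≤ j → j ≤ n - 1 → (i + 2 ≤ j ∨ j + 2 ≤ i) →
    e i * e j = e j * e i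
  L2 : ∀ (a b : X) (j : ℕ), 2 ≤ j → j ≤ n - 1 → F a b * e j = e j * F a b
  L3 : ∀ (a b : X) (j : ℕ), 1 ≤ j → j ≤ n - 2 → G a b * e j = e j * G a b
  L4 : ∀ (a b c d : X), 2 ≤ n → F a b * G c d = G c d * F a b
  L5 : ∀ i j, 1 ≤ i → i ≤ n - 1 → 1 ≤ j → j ≤ n - 1 → (i = j + 1 ∨ j = i + 1) →
    e i * e j * e i = e i
  L6 : ∀ (a b : X) (j : ℕ), 2 ≤ j → j ≤ n - 1 → e j * W a b = W a b * e (j - 1)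
  L7 : ∀ (a b : X) (j : ℕ), 1 ≤ j → j ≤ n - 2 → e j * V a b = V a b * e (j + 1)
  L8 : ∀ (a b c d : X), 2 ≤ n → G a b * W c d = W c a * e (n - 1) * G b d
  L9 : ∀ (a b c d : X), 2 ≤ n → F a b * V c d = V a d * e 1 * F b c
  L10 : ∀ (a b c d : X), 2 ≤ n → W a b * F c d = F a c * e 1 * W d b
  L11 : ∀ (a b c d : X), 2 ≤ n → V a b * G c d = G b c * e (n - 1) * V a d
  L12 : ∀ (a b : X), 2 ≤ n → e 1 * W a b = ascProd e 1 (n - 1) * V a b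
  L13 : ∀ (a b : X), 2 ≤ n → W a b * e (n - 1) = V a b * ascProd e 1 (n - 1)
  L14 : ∀ (a b : X), 2 ≤ n → e (n - 1) * V a b = descProd e 1 (n - 1) * W a b
  L15 : ∀ (a b : X), 2 ≤ n → V a b * e 1 = W a b * descProd e 1 (n - 1)
  L16 : ∀ (a b c d : X), W a b * W c d = F a c * ascProd e 1 (n - 1) * G b d
  L17 : ∀ (a b c d : X), V a b * V c d = G b d * descProd e 1 (n - 1) * F a c
  L18 : ∀ (a b c d : X), 2 ≤ n → V a b * e 1 * W c d = F a c * G b d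
  L19 : ∀ j, 1 ≤ j → j ≤ n - 1 → e j * e j = β • e j
  L20 : ∀ (a b c d : X), F c a * F b d = α a b • F c d
  L21 : ∀ (a b : X), 2 ≤ n → e 1 * F a b * e 1 = α a b • e 1
  L22 : ∀ (a b c d : X), F c a * W b d = α a b • W c d
  L23 : ∀ (a b c d : X), V a d * F b c = α a b • V c d
  L24 : ∀ (a b c d : X), V a c * W b d = α a b • G c d
  L25 : ∀ (a b c d : X), G c a * G b d = δ a b • G c d
  L26 : ∀ (a b : X), 2 ≤ n → e (n - 1) * G a b * e (n - 1) = δ a b • e (n - 1)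
  L27 : ∀ (a b c d : X), G c a * V d b = δ a b • V d c
  L28 : ∀ (a b c d : X), W c a * G b d = δ a b • W c d
  L29 : ∀ (a b c d : X), W c a * V d b = δ a b • F c d
  L30 : Odd n → ∀ (a b c d : X),
    W c b * Oprod e n * W a d * Oprod e n = γ a b • (W c d * Oprod e n)
  L31 : Odd n → ∀ (a b c d : X),
    F c a * Eprod e n * V d b * Eprod e n = γ a b • (F c d * Eprod e n)
  L32 : Odd n → ∀ (a b c d : X),
    V a d * Eprod e n * V c b * Eprod e n = γ a b • (V c d * Eprod e n)
  L33 : Odd n → ∀ (a b c d : X),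
    G c b * Oprod e n * W a d * Oprod e n = γ a b • (G c d * Oprod e n)
  L34 : Even n → ∀ (a b : X),
    ThetaProd e n * W a b * ThetaProd e n = γ a b • ThetaProd e n
  L35 : n = 1 → ∀ (a b c d : X), F c a * G b d = γ a b • W c d
  L36 : n = 1 → ∀ (a b c d : X), G d b * F a c = γ a b • V c d
  L37 : n = 1 → ∀ (a b c d : X), W c b * F a d = γ a b • F c d
  L38 : n = 1 → ∀ (a b c d : X), V a c * G b d = γ a b • G c d

lemma descProd_cons {A : Type*} [Ring A] (e : ℕ → A) (j k : ℕ) (h : j ≤ k + 1) :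
    descProd e j (k + 1) = e (k + 1) * descProd e j k := by
  unfold descProd
  have h1 : k + 1 + 1 - j = (k + 1 - j) + 1 := by omega
  rw [h1, List.range_succ_eq_map, List.map_cons, List.prod_cons, List.map_map]
  have : (fun i => e (k + 1 - i)) ∘ Nat.succ = fun i => e (k - i) := by
    funext i
    simp [Function.comp, Nat.succ_sub_succ]
  rw [this]
  simp

lemma descProd_snoc {A : Type*} [Ring A] (e : ℕ → A) (j k : ℕ) (h : j ≤ k) :
    descProd e j k = descProd e (j + 1) k * e j := by
  unfold descProd
  have h1 : k + 1 - j = (k - j) + 1 := by omega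
  have h2 : k + 1 - (j + 1) = k - j := by omega
  have h3 : k - (k - j) = j := by omega
  rw [h1, h2, List.range_succ, List.map_append, List.prod_append]
  simp [h3]

theorem stmt {R : Type*} [CommRing R] {A : Type*} [Ring A] [Algebra R A] {X : Type*}
    (n : ℕ) (e : ℕ → A) (F G W V : X → X → A) (β : R) (α δ γ : X → X → R)
    (hrel : LabelAlgebraRel R A X n e F G W V β α δ γ)
    (hn : 2 ≤ n) (j : ℕ) (hj1 : 1 ≤ j) (hj2 : j ≤ n - 1) (a b : X) :
    V a b * e j = descProd e 1 (j - 1) * W a b * descProd e j (n - 1) := by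
  revert hj2
  induction j, hj1 using Nat.le_induction with
  | base =>
    intro _
    have : descProd e 1 (1 - 1) = 1 := by simp [descProd]
    rw [this, one_mul]
    exact hrel.L15 a b hn
  | succ j hj1' IH =>
    intro hj2
    have hjn : j ≤ n - 1 := by omega
    have hIH := IH hjn
    have h7 : e j * V a b = V a b * e (j + 1) := hrel.L7 a b j hj1' (by omega)
    have h5 : e (j + 1) * e j * e (j + 1) = e (j + 1) :=
      hrel.L5 (j + 1) j (by omega) hj2 hj1' hjn (Or.inl rfl)
    obtain ⟨m, rfl⟩ : ∃ m, j = m + 1 := ⟨j - 1, by omega⟩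
    have hD : descProd e 1 (m + 1) = e (m + 1) * descProd e 1 m :=
      descProd_cons e 1 m (by omega)
    have hE : descProd e (m + 1) (n - 1) * e (m + 1 + 1) = descProd e (m + 1 + 1) (n - 1) := by
      have h5' : e (m + 1 + 1) * (e (m + 1) * e (m + 1 + 1)) = e (m + 1 + 1) := by
        rw [← mul_assoc]; exact h5
      rw [descProd_snoc e (m + 1) (n - 1) hjn, descProd_snoc e (m + 1 + 1) (n - 1) hj2]
      simp only [mul_assoc]
      rw [h5']
    have key : V a b * e (m + 1 + 1) = e (m + 1) * (V a b * e (m + 1)) * e (m + 1 + 1) := by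
      calc V a b * e (m + 1 + 1)
          = V a b * (e (m + 1 + 1) * e (m + 1) * e (m + 1 + 1)) := by rw [h5]
        _ = (V a b * e (m + 1 + 1)) * e (m + 1) * e (m + 1 + 1) := by
            simp only [mul_assoc]
        _ = (e (m + 1) * V a b) * e (m + 1) * e (m + 1 + 1) := by rw [← h7]
        _ = e (m + 1) * (V a b * e (m + 1)) * e (m + 1 + 1) := by
            simp only [mul_assoc]
    rw [key, hIH]
    have hsub : m + 1 - 1 = m := by omega
    have hsub2 : m + 1 + 1 - 1 = m + 1 := by omega
    rw [hsub, hsub2, hD]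
    calc e (m + 1) * (descProd e 1 m * W a b * descProd e (m + 1) (n - 1)) * e (m + 1 + 1)
        = e (m + 1) * descProd e 1 m * W a b * (descProd e (m + 1) (n - 1) * e (m + 1 + 1)) := by
          simp only [mul_assoc]
      _ = e (m + 1) * descProd e 1 m * W a b * descProd e (m + 1 + 1) (n - 1) := by rw [hE]
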